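/- Let X and Y be bipartite graphs without isolated vertices. If the posets B_0(X) and B_0(Y) are isomorphic, then the graphs X and Y are isomorphic. -/

import Mathlib

/-- A graph: a vertex type with a symmetric edge relation (loops allowed). -/
structure SymmGraph where
  V : Type
  E : V → V → Prop
  symm : ∀ ⦃x y⦄, E x y → E y x

/-- Graph homomorphisms. -/
def SymmGraph.Hom (G H : SymmGraph) : Type :=
  {f : G.V → H.V // ∀ ⦃x y⦄, G.E x y → H.E (f x) (f y)}

/-- Graph isomorphisms: bijective homomorphisms whose inverse is a homomorphism. -/
structure SymmGraph.Iso (G H : SymmGraph) extends G.V ≃ H.V where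
  edge_iff : ∀ x y, G.E x y ↔ H.E (toEquiv x) (toEquiv y)

/-- The complete graph `K₂` on two vertices. -/
def K2 : SymmGraph := ⟨Fin 2, fun x y => x ≠ y, fun _ _ h => h.symm⟩

/-- The tensor (categorical) product of graphs. -/
def SymmGraph.tensor (G H : SymmGraph) : SymmGraph :=
  ⟨G.V × H.V, fun p q => G.E p.1 q.1 ∧ H.E p.2 q.2,
   fun _ _ h => ⟨G.symm h.1, H.symm h.2⟩⟩

/-- No isolated vertices. -/
def SymmGraph.NoIsolated (G : SymmGraph) : Prop := ∀ x, ∃ y, G.E x y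

/-- A graph is bipartite if it admits a homomorphism to `K₂`. -/
def SymmGraph.Bipartite (G : SymmGraph) : Prop :=
  ∃ c : G.V → Fin 2, ∀ ⦃x y⦄, G.E x y → c x ≠ c y

/-- `B₀(X)`: the unordered pairs `{σ, τ}` of nonempty subsets of `V(X)` with
`σ × τ ⊆ E(X)`. -/
def SymmGraph.B0 (X : SymmGraph) : Type :=
  {c : Set (Set X.V) // ∃ σ τ : Set X.V, σ.Nonempty ∧ τ.Nonempty ∧
    (∀ a ∈ σ, ∀ b ∈ τ, X.E a b) ∧ c = {σ, τ}}

/-- The ordering of `B₀(X)`: `α ≤ β` iff each member of `α` is contained in some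
member of `β`. -/
instance (X : SymmGraph) : LE X.B0 :=
  ⟨fun α β => ∀ σ ∈ α.1, ∃ τ ∈ β.1, σ ⊆ τ⟩

/-!
Fix proper `2`-colourings of `X` and `Y`. A member `{σ, τ}` of `B₀` is determined by the vertex
set `σ ∪ τ`, so `B₀` is the poset of vertex sets of complete bipartite subgraphs under inclusion.
Its minimal elements are the edges, and two edges meet iff something lies above both of them and
above no third edge; hence an isomorphism of the posets is an isomorphism of the line graphs.
Since bipartite graphs have no triangles, the edges at a vertex of degree at least two are sent
to edges through one common vertex, which is the image of that vertex. A pendant vertex is sent to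
the end of the image of its edge that lies on no other edge; when both ends qualify (the edge is
isolated), the colours decide.
-/

theorem OrderIso.isMin_apply_iff {P Q : Type*} [PartialOrder P] [PartialOrder Q] (φ : P ≃o Q)
    {a : P} : IsMin (φ a) ↔ IsMin a :=
  φ.toInitialSeg.isMin_apply_iff

/-- When `P` is `B₀(X)`, whose minimal elements are the edges of `X`, this is adjacency in the
line graph of `X`. -/
def LineAdj {P : Type*} [LE P] (e f : P) : Prop :=
  IsMin e ∧ IsMin f ∧ e ≠ f ∧ ∃ γ, e ≤ γ ∧ f ≤ γ ∧ ∀ m ≤ γ, IsMin m → m = e ∨ m = f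

theorem OrderIso.lineAdj_apply_iff {P Q : Type*} [PartialOrder P] [PartialOrder Q] (φ : P ≃o Q)
    {e f : P} : LineAdj (φ e) (φ f) ↔ LineAdj e f := by
  simp only [LineAdj, φ.isMin_apply_iff, φ.injective.ne_iff, φ.surjective.exists, φ.le_iff_le,
    φ.surjective.forall, φ.injective.eq_iff]

namespace SymmGraph

def IsColoring {α : Type*} (G : SymmGraph) (c : G.V → α) : Prop :=
  ∀ ⦃x y⦄, G.E x y → c x ≠ c y

variable {G : SymmGraph} {c : G.V → Fin 2}

theorem IsColoring.not_triangle (hc : G.IsColoring c) {a b d : G.V} (hab : G.E a b)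
    (hbd : G.E b d) (had : G.E a d) : False := by
  have := hc hab; have := hc hbd; have := hc had
  omega

theorem IsColoring.color_eq_of_forall_adj (hc : G.IsColoring c) {σ τ : Set G.V}
    (hτ : τ.Nonempty) (hE : ∀ a ∈ σ, ∀ b ∈ τ, G.E a b) {a a' : G.V} (ha : a ∈ σ)
    (ha' : a' ∈ σ) : c a = c a' := by
  obtain ⟨b, hb⟩ := hτ
  have := hc (hE a ha b hb); have := hc (hE a' ha' b hb)
  omega

def IsBiclique (G : SymmGraph) (c : G.V → Fin 2) (S : Set G.V) : Prop :=
  (∃ a ∈ S, ∃ b ∈ S, G.E a b) ∧ ∀ a ∈ S, ∀ b ∈ S, c a ≠ c b → G.E a b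

/-- Given a `2`-colouring `c`, an element `{σ, τ}` of `B₀(G)` is recorded as the vertex set
`σ ∪ τ`, from which `σ` and `τ` are recovered as its two colour classes. -/
def Biclique (G : SymmGraph) (c : G.V → Fin 2) : Type :=
  {S : Set G.V // G.IsBiclique c S}

instance : SetLike (G.Biclique c) G.V :=
  SetLike.instSubtypeSet

instance : PartialOrder (G.Biclique c) :=
  .ofSetLike (G.Biclique c) G.V

theorem IsColoring.isBiclique_union (hc : G.IsColoring c) {σ τ : Set G.V} (hσ : σ.Nonempty)
    (hτ : τ.Nonempty) (hE : ∀ a ∈ σ, ∀ b ∈ τ, G.E a b) : G.IsBiclique c (σ ∪ τ) := by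
  obtain ⟨a, ha⟩ := hσ
  obtain ⟨b, hb⟩ := hτ
  have hE' : ∀ b ∈ τ, ∀ a ∈ σ, G.E b a := fun b hb a ha => G.symm (hE a ha b hb)
  refine ⟨⟨a, .inl ha, b, .inr hb, hE a ha b hb⟩, ?_⟩
  rintro u (hu | hu) v (hv | hv) huv
  · exact absurd (hc.color_eq_of_forall_adj ⟨b, hb⟩ hE hu hv) huv
  · exact hE u hu v hv
  · exact hE' u hu v hv
  · exact absurd (hc.color_eq_of_forall_adj ⟨a, ha⟩ hE' hu hv) huv

theorem IsColoring.isBiclique_of_adj_of_adj (hc : G.IsColoring c) {x a b : G.V} (ha : G.E x a)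
    (hb : G.E x b) : G.IsBiclique c {x, a, b} := by
  have := hc ha; have := hc hb
  refine ⟨⟨x, .inl rfl, a, .inr (.inl rfl), ha⟩, ?_⟩
  rintro u (rfl | rfl | rfl) v (rfl | rfl | rfl) huv
  all_goals first
    | exact absurd rfl huv | exact ha | exact hb | exact G.symm ha | exact G.symm hb
    | exact absurd huv (by omega)

namespace Biclique

theorem exists_adj (p : G.Biclique c) : ∃ a ∈ p, ∃ b ∈ p, G.E a b :=
  p.2.1

theorem adj_of_color_ne (p : G.Biclique c) {a b : G.V} (ha : a ∈ p) (hb : b ∈ p)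
    (h : c a ≠ c b) : G.E a b :=
  p.2.2 a ha b hb h

theorem exists_mem_color (hc : G.IsColoring c) (p : G.Biclique c) (i : Fin 2) :
    ∃ v ∈ p, c v = i := by
  obtain ⟨a, ha, b, hb, hab⟩ := p.exists_adj
  by_cases hai : c a = i
  · exact ⟨a, ha, hai⟩
  · exact ⟨b, hb, by have := hc hab; omega⟩

theorem exists_mem_ne (hc : G.IsColoring c) (p : G.Biclique c) (v : G.V) : ∃ w ∈ p, w ≠ v := by
  obtain ⟨a, ha, b, hb, hab⟩ := p.exists_adj
  by_cases hav : a = v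
  · exact ⟨b, hb, fun hbv => hc hab (by rw [hav, hbv])⟩
  · exact ⟨a, ha, hav⟩

def ofEdge {a b : G.V} (h : G.E a b) : G.Biclique c :=
  ⟨{a, b}, ⟨a, .inl rfl, b, .inr rfl, h⟩, by
    rintro u (rfl | rfl) v (rfl | rfl) huv
    all_goals first | exact absurd rfl huv | exact h | exact G.symm h⟩

theorem ofEdge_le {p : G.Biclique c} {a b : G.V} (h : G.E a b) (ha : a ∈ p) (hb : b ∈ p) :
    ofEdge h ≤ p := by
  rintro v (rfl | rfl)
  exacts [ha, hb]

theorem isMin_ofEdge (hc : G.IsColoring c) {a b : G.V} (h : G.E a b) :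
    IsMin (ofEdge (c := c) h) := by
  intro q hq
  obtain ⟨u, hu, v, hv, huv⟩ := q.exists_adj
  have hne := hc huv
  rcases hq hu with rfl | rfl <;> rcases hq hv with rfl | rfl
  all_goals first | exact absurd rfl hne | exact ofEdge_le h hu hv | exact ofEdge_le h hv hu

section IsMin

variable {e f : G.Biclique c}

theorem exists_eq_ofEdge_of_isMin (he : IsMin e) : ∃ a b, ∃ h : G.E a b, e = ofEdge h := by
  obtain ⟨a, ha, b, hb, h⟩ := e.exists_adj
  exact ⟨a, b, h, le_antisymm (he (ofEdge_le h ha hb)) (ofEdge_le h ha hb)⟩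

theorem color_ne_of_isMin (hc : G.IsColoring c) (he : IsMin e) {x y : G.V} (hx : x ∈ e)
    (hy : y ∈ e) (hxy : x ≠ y) : c x ≠ c y := by
  obtain ⟨a, b, h, rfl⟩ := exists_eq_ofEdge_of_isMin he
  have := hc h
  rcases hx with rfl | rfl <;> rcases hy with rfl | rfl
  all_goals first | exact absurd rfl hxy | exact this | exact this.symm

theorem adj_of_isMin (hc : G.IsColoring c) (he : IsMin e) {x y : G.V} (hx : x ∈ e) (hy : y ∈ e)
    (hxy : x ≠ y) : G.E x y :=
  e.adj_of_color_ne hx hy (color_ne_of_isMin hc he hx hy hxy)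

theorem eq_ofEdge_of_isMin (hc : G.IsColoring c) (he : IsMin e) {x y : G.V} (hx : x ∈ e)
    (hy : y ∈ e) (hxy : x ≠ y) : e = ofEdge (adj_of_isMin hc he hx hy hxy) :=
  le_antisymm (he (ofEdge_le _ hx hy)) (ofEdge_le _ hx hy)

theorem eq_or_eq_of_isMin (hc : G.IsColoring c) (he : IsMin e) {x y w : G.V} (hx : x ∈ e)
    (hy : y ∈ e) (hxy : x ≠ y) (hw : w ∈ e) : w = x ∨ w = y := by
  rwa [eq_ofEdge_of_isMin hc he hx hy hxy] at hw

theorem eq_of_isMin_of_mem (hc : G.IsColoring c) (he : IsMin e) (hf : IsMin f) {x y : G.V}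
    (hxe : x ∈ e) (hxf : x ∈ f) (hye : y ∈ e) (hyf : y ∈ f) (hxy : x ≠ y) : e = f :=
  (eq_ofEdge_of_isMin hc he hxe hye hxy).trans (eq_ofEdge_of_isMin hc hf hxf hyf hxy).symm

theorem inter_nonempty_of_lineAdj (hc : G.IsColoring c) (h : LineAdj e f) :
    ((e : Set G.V) ∩ f).Nonempty := by
  obtain ⟨-, -, -, γ, heγ, hfγ, hγ⟩ := h
  -- an edge from `e` to `f` lies below `γ`, so it is `e` or `f`
  obtain ⟨u, hu, -⟩ := e.exists_adj
  obtain ⟨v, hv, hcuv⟩ : ∃ v ∈ f, c u ≠ c v := by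
    obtain ⟨b, hb, b', hb', hbb'⟩ := f.exists_adj
    by_cases hub : c u = c b
    · exact ⟨b', hb', by have := hc hbb'; omega⟩
    · exact ⟨b, hb, hub⟩
  have huv := γ.adj_of_color_ne (heγ hu) (hfγ hv) hcuv
  rcases hγ _ (ofEdge_le huv (heγ hu) (hfγ hv)) (isMin_ofEdge hc huv) with h | h
  · exact ⟨v, h ▸ Or.inr rfl, hv⟩
  · exact ⟨u, hu, h ▸ Or.inl rfl⟩

theorem lineAdj_of_inter_nonempty (hc : G.IsColoring c) (he : IsMin e) (hf : IsMin f)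
    (hne : e ≠ f) (h : ((e : Set G.V) ∩ f).Nonempty) : LineAdj e f := by
  obtain ⟨x, hxe, hxf⟩ := h
  obtain ⟨a, hae, hax⟩ := exists_mem_ne hc e x
  obtain ⟨b, hbf, hbx⟩ := exists_mem_ne hc f x
  have hxa := adj_of_isMin hc he hxe hae hax.symm
  have hxb := adj_of_isMin hc hf hxf hbf hbx.symm
  refine ⟨he, hf, hne, ⟨{x, a, b}, hc.isBiclique_of_adj_of_adj hxa hxb⟩, ?_, ?_, ?_⟩
  · intro w hw
    rcases eq_or_eq_of_isMin hc he hxe hae hax.symm hw with rfl | rfl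
    exacts [.inl rfl, .inr (.inl rfl)]
  · intro w hw
    rcases eq_or_eq_of_isMin hc hf hxf hbf hbx.symm hw with rfl | rfl
    exacts [.inl rfl, .inr (.inr rfl)]
  · intro m hmγ hm
    obtain ⟨u, hu, v, hv, huv⟩ := m.exists_adj
    have := hc huv; have := hc hxa; have := hc hxb
    have hxm : x ∈ m ∧ (a ∈ m ∨ b ∈ m) := by
      rcases hmγ hu with rfl | rfl | rfl <;> rcases hmγ hv with rfl | rfl | rfl
      all_goals first
        | exact ⟨hu, .inl hv⟩ | exact ⟨hu, .inr hv⟩ | exact ⟨hv, .inl hu⟩ | exact ⟨hv, .inr hu⟩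
        | (exfalso; omega)
    rcases hxm with ⟨hxm, ham | hbm⟩
    · exact .inl (eq_of_isMin_of_mem hc hm he hxm hxe ham hae hax.symm)
    · exact .inr (eq_of_isMin_of_mem hc hm hf hxm hxf hbm hbf hbx.symm)

theorem lineAdj_iff (hc : G.IsColoring c) (he : IsMin e) (hf : IsMin f) :
    LineAdj e f ↔ e ≠ f ∧ ((e : Set G.V) ∩ f).Nonempty :=
  ⟨fun h => ⟨h.2.2.1, inter_nonempty_of_lineAdj hc h⟩, fun h =>
    lineAdj_of_inter_nonempty hc he hf h.1 h.2⟩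

theorem inter_nonempty_iff (hc : G.IsColoring c) (he : IsMin e) (hf : IsMin f) :
    ((e : Set G.V) ∩ f).Nonempty ↔ e = f ∨ LineAdj e f := by
  rw [lineAdj_iff hc he hf]
  refine ⟨fun h => (em (e = f)).imp id fun hef => ⟨hef, h⟩, ?_⟩
  rintro (rfl | ⟨-, h⟩)
  · obtain ⟨a, ha, -⟩ := e.exists_adj
    exact ⟨a, ha, ha⟩
  · exact h

theorem mem_of_inter_nonempty (hc : G.IsColoring c) {e₁ e₂ : G.Biclique c} (h₁ : IsMin e₁)
    (h₂ : IsMin e₂) (hf : IsMin f) (hne : e₁ ≠ e₂) {x : G.V} (hx₁ : x ∈ e₁) (hx₂ : x ∈ e₂)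
    (hf₁ : ((f : Set G.V) ∩ e₁).Nonempty) (hf₂ : ((f : Set G.V) ∩ e₂).Nonempty) : x ∈ f := by
  obtain ⟨w₁, hw₁f, hw₁⟩ := hf₁
  obtain ⟨w₂, hw₂f, hw₂⟩ := hf₂
  by_contra hxf
  have hxw₁ : x ≠ w₁ := fun h => hxf (h ▸ hw₁f)
  have hxw₂ : x ≠ w₂ := fun h => hxf (h ▸ hw₂f)
  have hw : w₁ ≠ w₂ := by
    rintro rfl
    exact hne (eq_of_isMin_of_mem hc h₁ h₂ hx₁ hx₂ hw₁ hw₂ hxw₁)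
  exact hc.not_triangle (adj_of_isMin hc h₁ hx₁ hw₁ hxw₁) (adj_of_isMin hc hf hw₁f hw₂f hw)
    (adj_of_isMin hc h₂ hx₂ hw₂ hxw₂)

def IsIsolated (e : G.Biclique c) : Prop :=
  ∀ f : G.Biclique c, IsMin f → ((e : Set G.V) ∩ f).Nonempty → f = e

theorem isIsolated_of_forall_mem_iff (hc : G.IsColoring c) (he : IsMin e) {x y : G.V}
    (hx : x ∈ e) (hy : y ∈ e) (hxy : x ≠ y) (h : ∀ f : G.Biclique c, IsMin f → (x ∈ f ↔ y ∈ f)) :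
    IsIsolated e := by
  rintro f hf ⟨w, hwe, hwf⟩
  have hxyf : x ∈ f ∧ y ∈ f := by
    rcases eq_or_eq_of_isMin hc he hx hy hxy hwe with rfl | rfl
    exacts [⟨hwf, (h f hf).1 hwf⟩, ⟨(h f hf).2 hwf, hwf⟩]
  exact (eq_of_isMin_of_mem hc he hf hx hxyf.1 hy hxyf.2 hxy).symm

end IsMin

section OrderIso

variable {H : SymmGraph} {d : H.V → Fin 2} (ψ : G.Biclique c ≃o H.Biclique d)
  {e f : G.Biclique c}

theorem inter_nonempty_apply_iff (hc : G.IsColoring c) (hd : H.IsColoring d) (he : IsMin e)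
    (hf : IsMin f) : ((ψ e : Set H.V) ∩ ψ f).Nonempty ↔ ((e : Set G.V) ∩ f).Nonempty := by
  rw [inter_nonempty_iff hd (ψ.isMin_apply_iff.2 he) (ψ.isMin_apply_iff.2 hf),
    inter_nonempty_iff hc he hf, ψ.injective.eq_iff, ψ.lineAdj_apply_iff]

theorem IsIsolated.map (hc : G.IsColoring c) (hd : H.IsColoring d) (he : IsMin e)
    (h : IsIsolated e) : IsIsolated (ψ e) := by
  intro m hm hem
  obtain ⟨f, rfl⟩ := ψ.surjective m
  have hf := ψ.isMin_apply_iff.1 hm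
  exact congrArg ψ (h f hf ((inter_nonempty_apply_iff ψ hc hd he hf).1 hem))

end OrderIso

end Biclique

theorem IsColoring.union_inter_color_eq (hc : G.IsColoring c) {σ τ : Set G.V}
    (hτ : τ.Nonempty) (hE : ∀ a ∈ σ, ∀ b ∈ τ, G.E a b) {a : G.V} (ha : a ∈ σ) :
    (σ ∪ τ) ∩ {v | c v = c a} = σ := by
  ext v
  refine ⟨?_, fun hv => ⟨.inl hv, hc.color_eq_of_forall_adj hτ hE hv ha⟩⟩
  rintro ⟨hv | hv, hcv⟩
  · exact hv
  · exact absurd hcv.symm (hc (hE a ha v hv))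

theorem IsColoring.B0_val_eq (hc : G.IsColoring c) (α : G.B0) :
    α.1 = {⋃₀ α.1 ∩ {v | c v = 0}, ⋃₀ α.1 ∩ {v | c v = 1}} := by
  obtain ⟨_, σ, τ, ⟨a, ha⟩, ⟨b, hb⟩, hE, rfl⟩ := α
  have hσ := hc.union_inter_color_eq ⟨b, hb⟩ hE ha
  have hτ := hc.union_inter_color_eq ⟨a, ha⟩ (fun b hb a ha => G.symm (hE a ha b hb)) hb
  rw [Set.union_comm] at hτ
  change ({σ, τ} : Set (Set G.V)) = {⋃₀ {σ, τ} ∩ _, ⋃₀ {σ, τ} ∩ _}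
  rw [Set.sUnion_pair]
  have hab := hc (hE a ha b hb)
  obtain ⟨ha0, hb1⟩ | ⟨ha1, hb0⟩ : (c a = 0 ∧ c b = 1) ∨ (c a = 1 ∧ c b = 0) := by omega
  · rw [ha0] at hσ
    rw [hb1] at hτ
    rw [hσ, hτ]
  · rw [ha1] at hσ
    rw [hb0] at hτ
    rw [hσ, hτ, Set.pair_comm]

theorem IsColoring.isBiclique_sUnion (hc : G.IsColoring c) (α : G.B0) :
    G.IsBiclique c (⋃₀ α.1) := by
  obtain ⟨_, σ, τ, hσ, hτ, hE, rfl⟩ := α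
  change G.IsBiclique c (⋃₀ {σ, τ})
  rw [Set.sUnion_pair]
  exact hc.isBiclique_union hσ hτ hE

theorem IsColoring.B0_le_iff (hc : G.IsColoring c) {α β : G.B0} : α ≤ β ↔ ⋃₀ α.1 ⊆ ⋃₀ β.1 := by
  refine ⟨fun h => Set.sUnion_subset fun σ hσ => ?_, fun h σ hσ => ?_⟩
  · obtain ⟨τ, hτ, hστ⟩ := h σ hσ
    exact hστ.trans (Set.subset_sUnion_of_mem hτ)
  · rw [hc.B0_val_eq α] at hσ
    rw [hc.B0_val_eq β]
    rcases hσ with rfl | rfl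
    · exact ⟨_, .inl rfl, Set.inter_subset_inter_left _ h⟩
    · exact ⟨_, .inr rfl, Set.inter_subset_inter_left _ h⟩

def orderIsoBiclique (hc : G.IsColoring c) : G.B0 ≃o G.Biclique c where
  toFun α := ⟨⋃₀ α.1, hc.isBiclique_sUnion α⟩
  invFun S := ⟨{(S : Set G.V) ∩ {v | c v = 0}, (S : Set G.V) ∩ {v | c v = 1}}, _, _,
    by obtain ⟨v, hv, hcv⟩ := S.exists_mem_color hc 0; exact ⟨v, hv, hcv⟩,
    by obtain ⟨v, hv, hcv⟩ := S.exists_mem_color hc 1; exact ⟨v, hv, hcv⟩,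
    fun a ha b hb => S.adj_of_color_ne ha.1 hb.1 (by rw [ha.2, hb.2]; decide), rfl⟩
  left_inv α := Subtype.ext (hc.B0_val_eq α).symm
  right_inv S := by
    refine SetLike.coe_injective (Set.ext fun v => ?_)
    change v ∈ ⋃₀ {(S : Set G.V) ∩ _, _} ↔ v ∈ S
    rw [Set.sUnion_pair, ← Set.inter_union_distrib_left]
    exact and_iff_left (by simp only [Set.mem_union, Set.mem_ofPred_eq]; omega)
  map_rel_iff' := hc.B0_le_iff.symm

open Biclique

section Corresponds

variable {X Y : SymmGraph} {cX : X.V → Fin 2} {cY : Y.V → Fin 2}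
  (ψ : X.Biclique cX ≃o Y.Biclique cY)

/-- The second condition settles the two ends of an isolated edge, which the first cannot tell
apart. -/
def Corresponds (x : X.V) (y : Y.V) : Prop :=
  (∀ e : X.Biclique cX, IsMin e → (x ∈ e ↔ y ∈ ψ e)) ∧
    ∀ e : X.Biclique cX, IsMin e → x ∈ e → IsIsolated e → cX x = cY y

variable {ψ}

theorem Corresponds.symm (hcX : X.IsColoring cX) (hcY : Y.IsColoring cY) {x : X.V} {y : Y.V}
    (h : Corresponds ψ x y) : Corresponds ψ.symm y x := by
  refine ⟨fun m hm => ?_, fun m hm hym hiso => ?_⟩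
  · have h' := h.1 (ψ.symm m) (ψ.symm.isMin_apply_iff.2 hm)
    rw [ψ.apply_symm_apply] at h'
    exact h'.symm
  · have he := ψ.symm.isMin_apply_iff.2 hm
    refine (h.2 (ψ.symm m) he ?_ (hiso.map ψ.symm hcY hcX hm)).symm
    exact (h.1 _ he).2 (by rwa [ψ.apply_symm_apply])

theorem Corresponds.unique (hcX : X.IsColoring cX) (hcY : Y.IsColoring cY) (hX : X.NoIsolated)
    {x : X.V} {y y' : Y.V} (h : Corresponds ψ x y) (h' : Corresponds ψ x y') : y = y' := by
  by_contra hne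
  obtain ⟨b, hxb⟩ := hX x
  have he := isMin_ofEdge hcX hxb
  have hψe := ψ.isMin_apply_iff.2 he
  have hy := (h.1 _ he).1 (.inl rfl)
  have hy' := (h'.1 _ he).1 (.inl rfl)
  have hiso := (isIsolated_of_forall_mem_iff hcY hψe hy hy' hne fun m hm =>
    ((h.symm hcX hcY).1 m hm).trans ((h'.symm hcX hcY).1 m hm).symm).map ψ.symm hcY hcX hψe
  rw [ψ.symm_apply_apply] at hiso
  exact color_ne_of_isMin hcY hψe hy hy' hne
    ((h.2 _ he (.inl rfl) hiso).symm.trans (h'.2 _ he (.inl rfl) hiso))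

theorem Corresponds.adj (hcX : X.IsColoring cX) (hcY : Y.IsColoring cY) {x x' : X.V}
    {y y' : Y.V} (h : Corresponds ψ x y) (h' : Corresponds ψ x' y') (hxx' : X.E x x') :
    Y.E y y' := by
  have he := isMin_ofEdge hcX hxx'
  refine adj_of_isMin hcY (ψ.isMin_apply_iff.2 he) ((h.1 _ he).1 (.inl rfl))
    ((h'.1 _ he).1 (.inr rfl)) ?_
  rintro rfl
  have hiso := isIsolated_of_forall_mem_iff hcX he (.inl rfl) (.inr rfl)
    (fun h => hcX hxx' (congrArg cX h)) fun f hf => (h.1 f hf).trans (h'.1 f hf).symm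
  exact hcX hxx' ((h.2 _ he (.inl rfl) hiso).trans (h'.2 _ he (.inr rfl) hiso).symm)

variable (ψ)

theorem exists_corresponds_of_ne (hcX : X.IsColoring cX) (hcY : Y.IsColoring cY) {x : X.V}
    {e e' : X.Biclique cX} (he : IsMin e) (he' : IsMin e') (hne : e ≠ e') (hx : x ∈ e)
    (hx' : x ∈ e') : ∃ y, Corresponds ψ x y := by
  have hψe := ψ.isMin_apply_iff.2 he
  have hψe' := ψ.isMin_apply_iff.2 he'
  obtain ⟨y, hy, hy'⟩ := (inter_nonempty_apply_iff ψ hcX hcY he he').2 ⟨x, hx, hx'⟩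
  refine ⟨y, fun f hf => ⟨fun hxf => ?_, fun hyf => ?_⟩, fun f hf hxf hiso => ?_⟩
  · exact mem_of_inter_nonempty hcY hψe hψe' (ψ.isMin_apply_iff.2 hf) (ψ.injective.ne hne) hy hy'
      ((inter_nonempty_apply_iff ψ hcX hcY hf he).2 ⟨x, hxf, hx⟩)
      ((inter_nonempty_apply_iff ψ hcX hcY hf he').2 ⟨x, hxf, hx'⟩)
  · exact mem_of_inter_nonempty hcX he he' hf hne hx hx'
      ((inter_nonempty_apply_iff ψ hcX hcY hf he).1 ⟨y, hyf, hy⟩)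
      ((inter_nonempty_apply_iff ψ hcX hcY hf he').1 ⟨y, hyf, hy'⟩)
  · exact absurd ((hiso e he ⟨x, hxf, hx⟩).trans (hiso e' he' ⟨x, hxf, hx'⟩).symm) hne

theorem corresponds_of_forall_eq {x : X.V} {y : Y.V} {e : X.Biclique cX} (hx : x ∈ e)
    (hxe : ∀ f, IsMin f → x ∈ f → f = e) (hy : y ∈ ψ e)
    (hye : ∀ m, IsMin m → y ∈ m → m = ψ e) (hcol : IsIsolated e → cX x = cY y) :
    Corresponds ψ x y := by
  refine ⟨fun f hf => ⟨fun hxf => hxe f hf hxf ▸ hy, fun hyf => ?_⟩,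
    fun f hf hxf hiso => hcol (hxe f hf hxf ▸ hiso)⟩
  rwa [ψ.injective (hye _ (ψ.isMin_apply_iff.2 hf) hyf)]

theorem exists_corresponds_of_forall_eq (hcX : X.IsColoring cX) (hcY : Y.IsColoring cY)
    {x : X.V} {e : X.Biclique cX} (he : IsMin e) (hx : x ∈ e)
    (hxe : ∀ f, IsMin f → x ∈ f → f = e) : ∃ y, Corresponds ψ x y := by
  by_cases hiso : IsIsolated e
  · obtain ⟨y, hy, hcy⟩ := (ψ e).exists_mem_color hcY (cX x)
    exact ⟨y, corresponds_of_forall_eq ψ hx hxe hy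
      (fun m hm hym => hiso.map ψ hcX hcY he m hm ⟨y, hy, hym⟩) fun _ => hcy.symm⟩
  obtain ⟨f, hf, ⟨b, hbe, hbf⟩, hfe⟩ :
      ∃ f : X.Biclique cX, IsMin f ∧ ((e : Set X.V) ∩ f).Nonempty ∧ f ≠ e := by
    simpa [IsIsolated] using hiso
  have hbx : b ≠ x := fun h => hfe (hxe f hf (h ▸ hbf))
  obtain ⟨yb, hyb⟩ := exists_corresponds_of_ne ψ hcX hcY he hf hfe.symm hbe hbf
  have hybe := (hyb.1 e he).1 hbe
  obtain ⟨y, hy, hyyb⟩ := (ψ e).exists_mem_ne hcY yb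
  refine ⟨y, corresponds_of_forall_eq ψ hx hxe hy (fun m hm hym => ?_) fun h => absurd h hiso⟩
  obtain ⟨g, rfl⟩ := ψ.surjective m
  have hg := ψ.isMin_apply_iff.1 hm
  obtain ⟨w, hwg, hwe⟩ := (inter_nonempty_apply_iff ψ hcX hcY hg he).1 ⟨y, hym, hy⟩
  rcases eq_or_eq_of_isMin hcX he hx hbe hbx.symm hwe with rfl | rfl
  · rw [hxe g hg hwg]
  · exact eq_of_isMin_of_mem hcY hm (ψ.isMin_apply_iff.2 he) hym hy ((hyb.1 g hg).1 hwg) hybe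
      hyyb

theorem exists_corresponds (hcX : X.IsColoring cX) (hcY : Y.IsColoring cY) (hX : X.NoIsolated)
    (x : X.V) : ∃ y, Corresponds ψ x y := by
  obtain ⟨b, hxb⟩ := hX x
  have he := isMin_ofEdge hcX hxb
  by_cases h : ∃ f : X.Biclique cX, IsMin f ∧ x ∈ f ∧ f ≠ ofEdge hxb
  · obtain ⟨f, hf, hxf, hne⟩ := h
    exact exists_corresponds_of_ne ψ hcX hcY hf he hne hxf (.inl rfl)
  · push Not at h
    exact exists_corresponds_of_forall_eq ψ hcX hcY he (.inl rfl) h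

end Corresponds

theorem nonempty_iso_of_orderIso {X Y : SymmGraph} {cX : X.V → Fin 2} {cY : Y.V → Fin 2}
    (hcX : X.IsColoring cX) (hcY : Y.IsColoring cY) (hX : X.NoIsolated) (hY : Y.NoIsolated)
    (ψ : X.Biclique cX ≃o Y.Biclique cY) : Nonempty (X.Iso Y) := by
  choose f hf using exists_corresponds ψ hcX hcY hX
  choose g hg using exists_corresponds ψ.symm hcY hcX hY
  have hgf : ∀ x, g (f x) = x := fun x => (hg (f x)).unique hcY hcX hY ((hf x).symm hcX hcY)
  have hfg : ∀ y, f (g y) = y := fun y => (hf (g y)).unique hcX hcY hX ((hg y).symm hcY hcX)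
  refine ⟨{ toFun := f, invFun := g, left_inv := hgf, right_inv := hfg, edge_iff := ?_ }⟩
  refine fun x x' => ⟨(hf x).adj hcX hcY (hf x'), fun h => ?_⟩
  simpa only [hgf] using (hg (f x)).adj hcY hcX (hg (f x')) h

end SymmGraph

/-- for bipartite graphs `X`, `Y` without isolated vertices, if the posets
`B₀(X)` and `B₀(Y)` are isomorphic then `X ≅ Y`. -/
theorem B0_poset_iso_implies_graph_iso (X Y : SymmGraph)
    (hXbip : X.Bipartite) (hYbip : Y.Bipartite)
    (hX : X.NoIsolated) (hY : Y.NoIsolated)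
    (h : Nonempty (X.B0 ≃o Y.B0)) : Nonempty (X.Iso Y) := by
  obtain ⟨φ⟩ := h
  obtain ⟨cX, hcX⟩ := hXbip
  obtain ⟨cY, hcY⟩ := hYbip
  exact SymmGraph.nonempty_iso_of_orderIso hcX hcY hX hY
    ((SymmGraph.orderIsoBiclique hcX).symm.trans (φ.trans (SymmGraph.orderIsoBiclique hcY)))
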